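/- Let n, r, k, s be positive integers with n, k ≥ 3. Then R(n,r;k,s) ≤ R(n−1,r;k,s) + R(n,r;k−1,s). Moreover, if both R(n−1,r;k,s) and R(n,r;k−1,s) are even, then R(n,r;k,s) < R(n−1,r;k,s) + R(n,r;k−1,s). -/

import Mathlib

open SimpleGraph

/-- The number of edges of a simple graph. -/
noncomputable def edgeCount {V : Type*} (G : SimpleGraph V) : ℕ := Nat.card G.edgeSet

/-- The degree of a vertex in a simple graph. -/
noncomputable def degreeCount {V : Type*} (G : SimpleGraph V) (v : V) : ℕ := Nat.card (G.neighborSet v)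

/-- A finset of vertices is independent in `G`. -/
def IsIndepFinset {V : Type*} (G : SimpleGraph V) (s : Finset V) : Prop :=
  ∀ u ∈ s, ∀ v ∈ s, u ≠ v → ¬ G.Adj u v

/-- The independence number of a simple graph. -/
noncomputable def indepNum' {V : Type*} (G : SimpleGraph V) : ℕ :=
  sSup {n | ∃ s : Finset V, IsIndepFinset G s ∧ s.card = n}

/-- `G` contains a subgraph isomorphic to `H`, i.e. there is an injective
graph homomorphism from `H` to `G`. -/
def ContainsCopy {V W : Type*} (G : SimpleGraph V) (H : SimpleGraph W) : Prop :=
  ∃ f : H →g G, Function.Injective f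

/-- `G` contains no subgraph isomorphic to any graph in the family `L`. -/
def FamilyFree {V : Type*} (L : Set (Σ n : ℕ, SimpleGraph (Fin n))) (G : SimpleGraph V) : Prop :=
  ∀ H ∈ L, ¬ ContainsCopy G H.2

/-- `ex(p; L)`: the maximal number of edges in a graph of order `p`
containing no subgraph isomorphic to a member of `L`. -/
noncomputable def exNum (p : ℕ) (L : Set (Σ n : ℕ, SimpleGraph (Fin n))) : ℕ :=
  sSup {m | ∃ G : SimpleGraph (Fin p), FamilyFree L G ∧ edgeCount G = m}

/-- `G` is an `(n,m)` graph: every subgraph induced by `n` vertices has at most `m` edges. -/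
def IsNMGraph {V : Type*} (n m : ℕ) (G : SimpleGraph V) : Prop :=
  ∀ s : Finset V, s.card = n → edgeCount (G.induce (↑s : Set V)) ≤ m

/-- `e(n,m;p)`: the maximal number of edges in an `(n,m)` graph of order `p`. -/
noncomputable def maxEdgesNM (n m p : ℕ) : ℕ :=
  sSup {e | ∃ G : SimpleGraph (Fin p), IsNMGraph n m G ∧ edgeCount G = e}

/-- The Ramsey property for `R(n,r;k,s)` at order `p`: every graph `G` of order `p`
either contains a subgraph induced by `n` vertices with at most `r-1` edges, or its
complement contains a subgraph induced by `k` vertices with at most `s-1` edges. -/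
def RamseyProp (n r k s p : ℕ) : Prop :=
  ∀ G : SimpleGraph (Fin p),
    (∃ t : Finset (Fin p), t.card = n ∧ edgeCount (G.induce (↑t : Set (Fin p))) ≤ r - 1) ∨
    (∃ t : Finset (Fin p), t.card = k ∧ edgeCount ((Gᶜ).induce (↑t : Set (Fin p))) ≤ s - 1)

/-- The generalized Ramsey number `R(n,r;k,s)`. -/
noncomputable def genRamsey (n r k s : ℕ) : ℕ :=
  sInf {p | 0 < p ∧ RamseyProp n r k s p}

/-- `G` satisfies the `(k,s)` condition: every subgraph induced by `k` vertices
has at least `s` edges. -/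
def KSCondition {V : Type*} (k s : ℕ) (G : SimpleGraph V) : Prop :=
  ∀ t : Finset V, t.card = k → s ≤ edgeCount (G.induce (↑t : Set V))


section Aux

open Finset

/-- The edge count of an induced subgraph equals the number of edges of `G`
with all endpoints in `s`. -/
lemma edgeCount_induce_eq {V : Type*} (G : SimpleGraph V) (s : Set V) :
    edgeCount (G.induce s) = Nat.card {e : Sym2 V | e ∈ G.edgeSet ∧ ∀ x ∈ e, x ∈ s} := by
  have hmem : ∀ e : Sym2 s, e ∈ (G.induce s).edgeSet →
      Sym2.map Subtype.val e ∈ {e : Sym2 V | e ∈ G.edgeSet ∧ ∀ x ∈ e, x ∈ s} := by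
    intro e
    induction e using Sym2.inductionOn with
    | hf a b =>
      intro he
      rw [SimpleGraph.mem_edgeSet] at he
      have hadj : G.Adj (a : V) (b : V) := by simpa using he
      refine ⟨hadj, ?_⟩
      intro x hx
      rw [Sym2.map_pair_eq, Sym2.mem_iff] at hx
      rcases hx with rfl | rfl
      · exact a.2
      · exact b.2
  apply Nat.card_congr
  refine Equiv.ofBijective (fun e => ⟨Sym2.map Subtype.val e.1, hmem e.1 e.2⟩) ⟨?_, ?_⟩
  · intro e₁ e₂ h
    have := congrArg Subtype.val h
    exact Subtype.ext (Sym2.map.injective Subtype.val_injective this)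
  · rintro ⟨e, he, hse⟩
    induction e using Sym2.inductionOn with
    | hf a b =>
      have ha : a ∈ s := hse a (Sym2.mem_mk_left a b)
      have hb : b ∈ s := hse b (Sym2.mem_mk_right a b)
      refine ⟨⟨s(⟨a, ha⟩, ⟨b, hb⟩), ?_⟩, ?_⟩
      · rw [SimpleGraph.mem_edgeSet]
        simpa using he
      · simp [Sym2.map_pair_eq]

/-- Inserting a vertex with no neighbors in `s` does not change the induced edge count. -/
lemma edgeCount_induce_insert {V : Type*} (G : SimpleGraph V) (v : V) (s : Set V)
    (h : ∀ u ∈ s, ¬ G.Adj v u) :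
    edgeCount (G.induce (insert v s)) = edgeCount (G.induce s) := by
  rw [edgeCount_induce_eq, edgeCount_induce_eq]
  congr 2
  ext e
  induction e using Sym2.inductionOn with
  | hf a b =>
    simp only [Set.mem_setOf_eq, SimpleGraph.mem_edgeSet, Sym2.mem_iff]
    constructor
    · rintro ⟨hab, hmem⟩
      have ha := hmem a (Or.inl rfl)
      have hb := hmem b (Or.inr rfl)
      rw [Set.mem_insert_iff] at ha hb
      have ha' : a ∈ s := by
        rcases ha with rfl | ha
        · exfalso
          rcases hb with rfl | hb
          · exact G.irrefl hab
          · exact h b hb hab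
        · exact ha
      have hb' : b ∈ s := by
        rcases hb with rfl | hb
        · exfalso
          exact h a ha' hab.symm
        · exact hb
      refine ⟨hab, ?_⟩
      intro x hx
      rcases hx with rfl | rfl
      · exact ha'
      · exact hb'
    · rintro ⟨hab, hmem⟩
      refine ⟨hab, ?_⟩
      intro x hx
      exact Set.mem_insert_of_mem v (hmem x hx)

/-- An induced subgraph on at most one vertex has no edges. -/
lemma edgeCount_induce_card_le_one {V : Type*} (G : SimpleGraph V) (s : Finset V)
    (hs : s.card ≤ 1) :
    edgeCount (G.induce (↑s : Set V)) = 0 := by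
  rw [edgeCount_induce_eq]
  have : {e : Sym2 V | e ∈ G.edgeSet ∧ ∀ x ∈ e, x ∈ (↑s : Set V)} = ∅ := by
    ext e
    induction e using Sym2.inductionOn with
    | hf a b =>
      simp only [Set.mem_setOf_eq, Set.mem_empty_iff_false, iff_false, not_and,
        SimpleGraph.mem_edgeSet]
      intro hab hmem
      have ha : a ∈ s := by
        have := hmem a (Sym2.mem_mk_left a b); simpa using this
      have hb : b ∈ s := by
        have := hmem b (Sym2.mem_mk_right a b); simpa using this
      have : 1 < s.card := Finset.one_lt_card.mpr ⟨a, ha, b, hb, hab.ne⟩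
      omega
  rw [this]
  simp

/-- Edge count transfers along injective comaps. -/
lemma edgeCount_induce_image {α β : Type*} [DecidableEq β] (G : SimpleGraph β) (f : α → β)
    (hf : Function.Injective f) (t : Finset α) :
    edgeCount (G.induce (↑(t.image f) : Set β)) =
      edgeCount ((G.comap f).induce (↑t : Set α)) := by
  have hco : (↑(t.image f) : Set β) = f '' (↑t : Set α) := Finset.coe_image
  let e : (↑t : Set α) ≃ (↑(t.image f) : Set β) :=
    (Equiv.Set.imageOfInjOn f (↑t : Set α) hf.injOn).trans (Equiv.setCongr hco.symm)
  have hiso : ((G.comap f).induce (↑t : Set α)) ≃g (G.induce (↑(t.image f) : Set β)) := by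
    refine ⟨e, ?_⟩
    intro a b
    exact Iff.rfl
  exact (Nat.card_congr hiso.mapEdgeSet).symm

lemma comap_compl_eq {α β : Type*} (G : SimpleGraph β) (f : α → β)
    (hf : Function.Injective f) :
    (G.comap f)ᶜ = Gᶜ.comap f := by
  ext a b
  simp only [SimpleGraph.compl_adj, SimpleGraph.comap_adj, hf.ne_iff]

lemma ramseyProp_symm {n r k s p : ℕ} (h : RamseyProp n r k s p) : RamseyProp k s n r p := by
  intro G
  rcases h Gᶜ with h1 | h1
  · exact Or.inr h1
  · left
    simpa [compl_compl] using h1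

lemma win1 {p n r k s R1 : ℕ} (hn : 1 ≤ n) (hR1 : RamseyProp (n - 1) r k s R1)
    (G : SimpleGraph (Fin p)) (v : Fin p) (S : Finset (Fin p))
    (hcard : R1 ≤ S.card) (hvS : v ∉ S) (hadj : ∀ u ∈ S, ¬ G.Adj v u) :
    (∃ t : Finset (Fin p), t.card = n ∧ edgeCount (G.induce (↑t : Set (Fin p))) ≤ r - 1) ∨
    (∃ t : Finset (Fin p), t.card = k ∧ edgeCount ((Gᶜ).induce (↑t : Set (Fin p))) ≤ s - 1) := by
  classical
  obtain ⟨S', hS'sub, hS'card⟩ := Finset.exists_subset_card_eq hcard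
  let f : Fin R1 → Fin p := fun i => ((S'.orderIsoOfFin hS'card) i : Fin p)
  have hfinj : Function.Injective f := by
    intro i j hij
    exact (S'.orderIsoOfFin hS'card).injective (Subtype.ext hij)
  have hfS : ∀ i, f i ∈ S := fun i => hS'sub ((S'.orderIsoOfFin hS'card) i).2
  rcases hR1 (G.comap f) with ⟨t, ht, hte⟩ | ⟨t, ht, hte⟩
  · left
    have himg : ∀ u ∈ t.image f, u ∈ S := by
      intro u hu
      obtain ⟨i, _, rfl⟩ := Finset.mem_image.mp hu
      exact hfS i
    have hvimg : v ∉ t.image f := fun hv => hvS (himg v hv)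
    refine ⟨insert v (t.image f), ?_, ?_⟩
    · rw [Finset.card_insert_of_notMem hvimg,
        Finset.card_image_of_injective _ hfinj, ht]
      omega
    · have hins : edgeCount (G.induce (↑(insert v (t.image f)) : Set (Fin p))) =
          edgeCount (G.induce (↑(t.image f) : Set (Fin p))) := by
        rw [Finset.coe_insert]
        exact edgeCount_induce_insert G v _ (fun u hu => hadj u (himg u hu))
      rw [hins, edgeCount_induce_image G f hfinj t]
      exact hte
  · right
    refine ⟨t.image f, by rw [Finset.card_image_of_injective _ hfinj, ht], ?_⟩
    rw [edgeCount_induce_image Gᶜ f hfinj t, ← comap_compl_eq G f hfinj]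
    exact hte

lemma win2 {p n r k s R2 : ℕ} (hk : 1 ≤ k) (hR2 : RamseyProp n r (k - 1) s R2)
    (G : SimpleGraph (Fin p)) (v : Fin p) (S : Finset (Fin p))
    (hcard : R2 ≤ S.card) (hvS : v ∉ S) (hadj : ∀ u ∈ S, G.Adj v u) :
    (∃ t : Finset (Fin p), t.card = n ∧ edgeCount (G.induce (↑t : Set (Fin p))) ≤ r - 1) ∨
    (∃ t : Finset (Fin p), t.card = k ∧ edgeCount ((Gᶜ).induce (↑t : Set (Fin p))) ≤ s - 1) := by
  have hadj' : ∀ u ∈ S, ¬ Gᶜ.Adj v u := by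
    intro u hu hc
    exact hc.2 (hadj u hu)
  have h := win1 (n := k) (r := s) (k := n) (s := r) hk (ramseyProp_symm hR2) Gᶜ v S hcard hvS hadj'
  rcases h with h | h
  · exact Or.inr h
  · left
    simpa [compl_compl] using h

lemma ramsey_step {n r k s R1 R2 : ℕ} (hn : 1 ≤ n) (hk : 1 ≤ k)
    (h1 : RamseyProp (n - 1) r k s R1) (h2 : RamseyProp n r (k - 1) s R2)
    {p : ℕ} (hp0 : 0 < p) (hp : R1 + R2 ≤ p) : RamseyProp n r k s p := by
  classical
  intro G
  have v : Fin p := ⟨0, hp0⟩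
  set B : Finset (Fin p) := G.neighborFinset v with hB
  set A : Finset (Fin p) := Finset.univ \ insert v B with hA
  have hvB : v ∉ B := SimpleGraph.notMem_neighborFinset_self G v
  have hcards : A.card + B.card + 1 = p := by
    have h1' : A.card = p - (B.card + 1) := by
      rw [hA, Finset.card_sdiff_of_subset (Finset.subset_univ _), Finset.card_insert_of_notMem hvB,
        Finset.card_univ, Fintype.card_fin]
    have hb : B.card + 1 ≤ p := by
      have : (insert v B).card ≤ p := by
        simpa [Finset.card_univ] using Finset.card_le_univ (insert v B)
      rwa [Finset.card_insert_of_notMem hvB] at this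
    omega
  rcases le_or_gt R1 A.card with hle | hlt
  · refine win1 hn h1 G v A hle ?_ ?_
    · simp [hA]
    · intro u hu
      rw [hA, Finset.mem_sdiff, Finset.mem_insert] at hu
      intro hadj
      exact hu.2 (Or.inr ((SimpleGraph.mem_neighborFinset G v u).mpr hadj))
  · rcases le_or_gt R2 B.card with hle2 | hlt2
    · refine win2 hk h2 G v B hle2 hvB ?_
      intro u hu
      exact (SimpleGraph.mem_neighborFinset G v u).mp hu
    · omega

lemma ramsey_step_even {n r k s R1 R2 : ℕ} (hn : 1 ≤ n) (hk : 1 ≤ k)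
    (h1 : RamseyProp (n - 1) r k s R1) (h2 : RamseyProp n r (k - 1) s R2)
    (he1 : Even R1) (he2 : Even R2) (hR1 : 0 < R1) (hR2 : 0 < R2) :
    RamseyProp n r k s (R1 + R2 - 1) := by
  classical
  set p := R1 + R2 - 1 with hpdef
  intro G
  by_cases hex : ∃ v : Fin p, R2 ≤ G.degree v
  · obtain ⟨v, hv⟩ := hex
    refine win2 hk h2 G v (G.neighborFinset v) ?_ (SimpleGraph.notMem_neighborFinset_self G v) ?_
    · rwa [SimpleGraph.card_neighborFinset_eq_degree]
    · intro u hu; exact (SimpleGraph.mem_neighborFinset G v u).mp hu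
  · push_neg at hex
    by_cases hex2 : ∃ v : Fin p, R1 ≤ (Finset.univ \ insert v (G.neighborFinset v)).card
    · obtain ⟨v, hv⟩ := hex2
      refine win1 hn h1 G v _ hv (by simp) ?_
      intro u hu
      rw [Finset.mem_sdiff, Finset.mem_insert] at hu
      intro hadj
      exact hu.2 (Or.inr ((SimpleGraph.mem_neighborFinset G v u).mpr hadj))
    · exfalso
      push_neg at hex2
      -- every vertex has degree exactly R2 - 1
      have hdeg : ∀ v : Fin p, G.degree v = R2 - 1 := by
        intro v
        have hv1 := hex v
        have hv2 := hex2 v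
        have hvB : v ∉ G.neighborFinset v := SimpleGraph.notMem_neighborFinset_self G v
        have hcard : (Finset.univ \ insert v (G.neighborFinset v)).card
            = p - (G.degree v + 1) := by
          rw [Finset.card_sdiff_of_subset (Finset.subset_univ _), Finset.card_insert_of_notMem hvB,
            Finset.card_univ, Fintype.card_fin, SimpleGraph.card_neighborFinset_eq_degree]
        have hb : G.degree v + 1 ≤ p := by
          have : (insert v (G.neighborFinset v)).card ≤ p := by
            simpa [Finset.card_univ] using Finset.card_le_univ (insert v (G.neighborFinset v))
          rwa [Finset.card_insert_of_notMem hvB,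
            SimpleGraph.card_neighborFinset_eq_degree] at this
        omega
      have hsum : ∑ v : Fin p, G.degree v = 2 * G.edgeFinset.card :=
        SimpleGraph.sum_degrees_eq_twice_card_edges G
      rw [Finset.sum_congr rfl (fun v _ => hdeg v)] at hsum
      rw [Finset.sum_const, Finset.card_univ, Fintype.card_fin, smul_eq_mul] at hsum
      -- p * (R2 - 1) = 2 * m with p odd and R2 - 1 odd: contradiction
      obtain ⟨a, ha⟩ := he1
      obtain ⟨b, hb⟩ := he2
      have heven : Even (p * (R2 - 1)) := ⟨G.edgeFinset.card, by omega⟩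
      rcases Nat.even_mul.mp heven with h | h <;> obtain ⟨c, hc⟩ := h <;> omega

lemma ramsey_base_left {n r k s : ℕ} (hn : n ≤ 1) (hr : 0 < r) : RamseyProp n r k s 1 := by
  intro G
  left
  obtain ⟨t, -, ht⟩ := Finset.exists_subset_card_eq
    (by simpa using hn : n ≤ (Finset.univ : Finset (Fin 1)).card)
  refine ⟨t, ht, ?_⟩
  rw [edgeCount_induce_card_le_one G t (by omega)]
  omega

lemma ramsey_base_right {n r k s : ℕ} (hk : k ≤ 1) (hs : 0 < s) : RamseyProp n r k s 1 := by
  intro G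
  right
  obtain ⟨t, -, ht⟩ := Finset.exists_subset_card_eq
    (by simpa using hk : k ≤ (Finset.univ : Finset (Fin 1)).card)
  refine ⟨t, ht, ?_⟩
  rw [edgeCount_induce_card_le_one Gᶜ t (by omega)]
  omega

lemma ramsey_exists (r s : ℕ) (hr : 0 < r) (hs : 0 < s) :
    ∀ N n k, n + k ≤ N → ∃ p, 0 < p ∧ RamseyProp n r k s p := by
  intro N
  induction N with
  | zero =>
    intro n k h
    exact ⟨1, one_pos, ramsey_base_left (by omega) hr⟩
  | succ N ih =>
    intro n k h
    by_cases hn : n ≤ 1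
    · exact ⟨1, one_pos, ramsey_base_left hn hr⟩
    · by_cases hk : k ≤ 1
      · exact ⟨1, one_pos, ramsey_base_right hk hs⟩
      · obtain ⟨p1, hp1, h1⟩ := ih (n - 1) k (by omega)
        obtain ⟨p2, hp2, h2⟩ := ih n (k - 1) (by omega)
        exact ⟨p1 + p2, by omega,
          ramsey_step (by omega) (by omega) h1 h2 (by omega) le_rfl⟩

end Aux

theorem stmt_19 (n r k s : ℕ) (hn : 3 ≤ n) (hk : 3 ≤ k) (hr0 : 0 < r) (hs0 : 0 < s) :
    genRamsey n r k s ≤ genRamsey (n - 1) r k s + genRamsey n r (k - 1) s ∧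
    (Even (genRamsey (n - 1) r k s) → Even (genRamsey n r (k - 1) s) →
      genRamsey n r k s < genRamsey (n - 1) r k s + genRamsey n r (k - 1) s) := by
  have hex1 : {p | 0 < p ∧ RamseyProp (n - 1) r k s p}.Nonempty := by
    obtain ⟨p, hp, h⟩ := ramsey_exists r s hr0 hs0 ((n - 1) + k) (n - 1) k le_rfl
    exact ⟨p, hp, h⟩
  have hex2 : {p | 0 < p ∧ RamseyProp n r (k - 1) s p}.Nonempty := by
    obtain ⟨p, hp, h⟩ := ramsey_exists r s hr0 hs0 (n + (k - 1)) n (k - 1) le_rfl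
    exact ⟨p, hp, h⟩
  have h1 : 0 < genRamsey (n - 1) r k s ∧
      RamseyProp (n - 1) r k s (genRamsey (n - 1) r k s) := Nat.sInf_mem hex1
  have h2 : 0 < genRamsey n r (k - 1) s ∧
      RamseyProp n r (k - 1) s (genRamsey n r (k - 1) s) := Nat.sInf_mem hex2
  set R1 := genRamsey (n - 1) r k s with hR1
  set R2 := genRamsey n r (k - 1) s with hR2
  constructor
  · have hstep : RamseyProp n r k s (R1 + R2) :=
      ramsey_step (by omega) (by omega) h1.2 h2.2 (by omega) le_rfl
    exact Nat.sInf_le ⟨by omega, hstep⟩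
  · intro he1 he2
    have hstep : RamseyProp n r k s (R1 + R2 - 1) :=
      ramsey_step_even (by omega) (by omega) h1.2 h2.2 he1 he2 h1.1 h2.1
    have hle : genRamsey n r k s ≤ R1 + R2 - 1 := Nat.sInf_le ⟨by omega, hstep⟩
    omega
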